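/- For every d ≥ 2 and positive integers K⁽¹⁾,…,K⁽ᵈ⁾, there exists a finite composition of additive integer coupling layers on ℤ^d (each of the form z_a = x_a, z_b = x_b + t(x_a) for some split (a,b) and integer-valued t) whose restriction to {0,…,K⁽¹⁾−1} × … × {0,…,K⁽ᵈ⁾−1} equals x ↦ (x₁ + K⁽¹⁾x₂ + … + (∏_{i=1}^{d-1}K⁽ⁱ⁾)x_d, 0, …, 0). -/

import Mathlib

open scoped Classical

/-- An additive integer coupling layer on `ℤ^d`: it fixes the coordinates in some set `a`
and adds to the remaining coordinates an integer-valued translation `t` that depends only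
on the `a`-coordinates. -/
def IsCouplingLayer (d : ℕ) (f : (Fin d → ℤ) → (Fin d → ℤ)) : Prop :=
  ∃ (a : Set (Fin d)) (t : (Fin d → ℤ) → (Fin d → ℤ)),
    (∀ x y : Fin d → ℤ, (∀ i ∈ a, x i = y i) → ∀ i, t x i = t y i) ∧
    ∀ x i, f x i = if i ∈ a then x i else x i + t x i

open Finset

/-!
Read the target in Horner form `x₀ + K₀ (x₁ + K₁ (x₂ + ⋯))` and induct on the number of
coordinates. Layers flattening the coordinates `1, …, d` act on `ℤ^(d+1)` through the tail, leaving
`(x₀, s, 0, …, 0)` with `s = x₁ + K₁ x₂ + ⋯`. Two more layers absorb `s`: first `x₀ ↦ x₀ + K₀ s`,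
then `s ↦ s - ⌊(x₀ + K₀ s) / K₀⌋`, which is `0` because `0 ≤ x₀ < K₀`.
-/

theorem Fin.prod_Iio_succ {M : Type*} [CommMonoid M] {n : ℕ} (K : Fin (n + 1) → M) (j : Fin n) :
    ∏ i ∈ Iio j.succ, K i = K 0 * ∏ i ∈ Iio j, K i.succ := by
  have h := prod_map (Iio j) (Fin.succEmb n) K
  rw [Fin.map_succEmb_Iio] at h
  simp only [Fin.coe_succEmb] at h
  rw [← h, ← prod_insert (by simp), Ioo_insert_left (Fin.succ_pos j)]
  rfl

theorem Fin.sum_prod_Iio_mul_succ {R : Type*} [CommSemiring R] {n : ℕ} (K x : Fin (n + 1) → R) :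
    ∑ j, (∏ i ∈ Iio j, K i) * x j =
      x 0 + K 0 * ∑ j : Fin n, (∏ i ∈ Iio j, K i.succ) * x j.succ := by
  have hIio : Iio (0 : Fin (n + 1)) = ∅ := Iio_bot
  simp [Fin.sum_univ_succ, Fin.prod_Iio_succ, mul_sum, mul_assoc, hIio]

theorem isCouplingLayer_update_add {d : ℕ} {i j : Fin d} (hij : i ≠ j) (g : ℤ → ℤ) :
    IsCouplingLayer d fun x => Function.update x i (x i + g (x j)) := by
  refine ⟨{i}ᶜ, fun x => Pi.single i (g (x j)), fun x y hxy k => ?_, fun x k => ?_⟩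
  · simp only [hxy j hij.symm]
  · by_cases hki : k = i
    · subst hki; simp
    · simp [hki]

def consLift {d : ℕ} (f : (Fin d → ℤ) → (Fin d → ℤ)) (x : Fin (d + 1) → ℤ) : Fin (d + 1) → ℤ :=
  Fin.cons (x 0) (f (Fin.tail x))

theorem IsCouplingLayer.consLift {d : ℕ} {f : (Fin d → ℤ) → (Fin d → ℤ)}
    (hf : IsCouplingLayer d f) : IsCouplingLayer (d + 1) (consLift f) := by
  obtain ⟨a, t, ht, hft⟩ := hf
  refine ⟨insert 0 (Fin.succ '' a), fun x => Fin.cons 0 (t (Fin.tail x)), fun x y hxy k => ?_,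
    fun x k => ?_⟩
  · have htail : ∀ i ∈ a, Fin.tail x i = Fin.tail y i := fun i hi =>
      hxy i.succ (Set.mem_insert_of_mem _ (Set.mem_image_of_mem _ hi))
    cases k using Fin.cases with
    | zero => rfl
    | succ k => simp only [Fin.cons_succ, ht _ _ htail]
  · cases k using Fin.cases with
    | zero => simp [_root_.consLift]
    | succ k => simp [_root_.consLift, hft, Fin.succ_ne_zero, Fin.tail]

theorem foldl_map_consLift {d : ℕ} (l : List ((Fin d → ℤ) → (Fin d → ℤ))) (x : Fin (d + 1) → ℤ) :
    (l.map consLift).foldl (fun y f => f y) x =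
      consLift (fun z => l.foldl (fun y f => f y) z) x := by
  induction l generalizing x with
  | nil => simp [consLift]
  | cons f l ih => simp [ih, consLift]

theorem update_update_cons_single {d : ℕ} {c x₀ : ℤ} (hx₀ : 0 ≤ x₀ ∧ x₀ < c) (s : ℤ) :
    let v : Fin (d + 2) → ℤ := Fin.cons x₀ (Pi.single 0 s)
    let w := Function.update v 0 (v 0 + c * v 1)
    Function.update w 1 (w 1 + -(w 0 / c)) = Pi.single 0 (x₀ + c * s) := by
  have hdiv : (x₀ + c * s) / c = s := by
    rw [Int.add_mul_ediv_left _ _ (by omega), Int.ediv_eq_zero_of_lt hx₀.1 hx₀.2, zero_add]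
  funext k
  cases k using Fin.cases with
  | zero => simp
  | succ k => cases k using Fin.cases with
    | zero => simp [hdiv]
    | succ k =>
      have hk : k.succ.succ ≠ 1 := fun h => Fin.succ_ne_zero k (Fin.succ_injective _ h)
      simp [Function.update_of_ne hk, Fin.succ_ne_zero]

theorem exists_couplingLayers_foldl_eq_single (d : ℕ) (K : Fin (d + 1) → ℤ) :
    ∃ l : List ((Fin (d + 1) → ℤ) → (Fin (d + 1) → ℤ)),
      (∀ f ∈ l, IsCouplingLayer (d + 1) f) ∧
      ∀ x : Fin (d + 1) → ℤ, (∀ i, 0 ≤ x i ∧ x i < K i) →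
        l.foldl (fun y f => f y) x = Pi.single 0 (∑ j, (∏ i ∈ Iio j, K i) * x j) := by
  induction d with
  | zero =>
    refine ⟨[], by simp, fun x _ => funext fun i => ?_⟩
    have hIio : Iio (0 : Fin 1) = ∅ := Iio_bot
    simp [Fin.fin_one_eq_zero i, hIio]
  | succ d ih =>
    obtain ⟨l, hl, hlx⟩ := ih (Fin.tail K)
    refine ⟨l.map consLift ++ [fun (x : Fin (d + 2) → ℤ) => Function.update x 0 (x 0 + K 0 * x 1),
      fun x => Function.update x 1 (x 1 + -(x 0 / K 0))], ?_, fun x hx => ?_⟩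
    · simp only [List.mem_append, List.mem_map, List.mem_cons, List.not_mem_nil, or_false]
      rintro f (⟨g, hg, rfl⟩ | rfl | rfl)
      · exact (hl g hg).consLift
      · exact isCouplingLayer_update_add zero_ne_one _
      · exact isCouplingLayer_update_add zero_ne_one.symm fun v => -(v / K 0)
    · have hinner : consLift (fun z => l.foldl (fun y f => f y) z) x =
          Fin.cons (x 0) (Pi.single 0 (∑ j : Fin (d + 1), (∏ i ∈ Iio j, K i.succ) * x j.succ)) := by
        simp only [consLift, hlx (Fin.tail x) fun i => hx i.succ]
        rfl
      rw [List.foldl_append, foldl_map_consLift, hinner, Fin.sum_prod_Iio_mul_succ K x]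
      exact update_update_cons_single (hx 0) _

/-- Lemma 2: for every `d ≥ 2` and positive integers `K⁽¹⁾,…,K⁽ᵈ⁾` there is a finite
composition of additive integer coupling layers on `ℤ^d` whose restriction to
`{0,…,K⁽¹⁾−1} × … × {0,…,K⁽ᵈ⁾−1}` is `x ↦ (x₁ + K⁽¹⁾x₂ + … + (∏_{i<d}K⁽ⁱ⁾)x_d, 0, …, 0)`. -/
theorem lemma2_couplings_flatten (d : ℕ) (hd : 2 ≤ d) (K : Fin d → ℤ) :
    ∃ l : List ((Fin d → ℤ) → (Fin d → ℤ)),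
      (∀ f ∈ l, IsCouplingLayer d f) ∧
      ∀ x : Fin d → ℤ, (∀ i, 0 ≤ x i ∧ x i < K i) →
        l.foldl (fun y f => f y) x =
          fun i => if i = (⟨0, by omega⟩ : Fin d)
            then ∑ j, (∏ l' ∈ Finset.Iio j, K l') * x j else 0 := by
  obtain ⟨d, rfl⟩ : ∃ d', d = d' + 1 := ⟨d - 1, by omega⟩
  obtain ⟨l, hl, hlx⟩ := exists_couplingLayers_foldl_eq_single d K
  refine ⟨l, hl, fun x hx => ?_⟩
  rw [hlx x hx]
  funext i
  exact Pi.single_apply _ _ _
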